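/- arXiv:2502.14329 — 2 statements merged into one kernel-verified Lean document; each statement's English description precedes it below -/
import Mathlib

section
/- Let 𝐂 be a full semi-AFL, G a finitely generated group, H ≤ G a subgroup of finite index, and b₁, …, bₙ a right transversal for H in G. Then, for each • ∈ {∀, ∃}: 𝐂^•(G) = { ⋃_{i=1}^n Lᵢbᵢ : Lᵢ ∈ 𝐂^•(H) for all 1 ≤ i ≤ n }. That is, the 𝐂^•-subsets of G are exactly the finite unions ⋃ᵢ Lᵢbᵢ where each Lᵢ is a 𝐂^•-subset of H. -/
/-!  Common framework: classes of languages over finite alphabets, `C^∀`- and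
`C^∃`-subsets of finitely generated monoids and groups, closure properties
(cone, full semi-AFL), and `C^•`-flatness.  -/

/-- A class of languages: for each finite alphabet `Fin n`, a collection of languages over it. -/
abbrev LangClass : Type := ∀ n : ℕ, Set (Set (List (Fin n)))

/-- `π` is a surjective monoid homomorphism from the free monoid on `Fin n`
(words, under concatenation) onto `M`; i.e. it presents `M` as a monoid generated
by the finite set `Fin n`. -/
structure FreeHomOnto {n : ℕ} (M : Type) [Monoid M] (π : List (Fin n) → M) : Prop where
  map_nil : π [] = 1
  map_append : ∀ u v : List (Fin n), π (u ++ v) = π u * π v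
  surjective : Function.Surjective π

/-- `X ⊆ M` is a `C^∀`-subset of `M` w.r.t. the generating map `π`:
the full preimage `π⁻¹(X)` is a language of the class `C`. -/
def CForall (C : LangClass) {n : ℕ} {M : Type} [Monoid M]
    (π : List (Fin n) → M) (X : Set M) : Prop :=
  {w : List (Fin n) | π w ∈ X} ∈ C n

/-- `X ⊆ M` is a `C^∃`-subset of `M` w.r.t. the generating map `π`:
some language of the class `C` is mapped onto `X` by `π`. -/
def CExists (C : LangClass) {n : ℕ} {M : Type} [Monoid M]
    (π : List (Fin n) → M) (X : Set M) : Prop :=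
  ∃ L ∈ C n, π '' L = X

/-- Closure under inverse images of homomorphisms of free monoids on finite alphabets.
Such a homomorphism is determined by its values `f i` on letters, sending `w` to `w.flatMap f`. -/
def ClosedUnderInvHom (C : LangClass) : Prop :=
  ∀ (m n : ℕ) (f : Fin m → List (Fin n)), ∀ L ∈ C n,
    {w : List (Fin m) | w.flatMap f ∈ L} ∈ C m

/-- Closure under images of homomorphisms of free monoids on finite alphabets. -/
def ClosedUnderHom (C : LangClass) : Prop :=
  ∀ (m n : ℕ) (f : Fin m → List (Fin n)), ∀ L ∈ C m,
    (fun w : List (Fin m) => w.flatMap f) '' L ∈ C n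

/-- A language over `Fin n` is regular if it is accepted by a DFA with finitely many states. -/
def IsRegularLang {n : ℕ} (L : Set (List (Fin n))) : Prop :=
  ∃ (σ : Type) (_ : Fintype σ) (A : DFA (Fin n) σ), ∀ w : List (Fin n), w ∈ A.accepts ↔ w ∈ L

/-- Closure under intersection with regular languages. -/
def ClosedUnderInterReg (C : LangClass) : Prop :=
  ∀ (n : ℕ), ∀ L ∈ C n, ∀ R : Set (List (Fin n)), IsRegularLang R → L ∩ R ∈ C n

/-- Closure under (binary) union. -/
def ClosedUnderUnion (C : LangClass) : Prop :=
  ∀ (n : ℕ), ∀ L₁ ∈ C n, ∀ L₂ ∈ C n, L₁ ∪ L₂ ∈ C n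

/-- A cone: a class of languages closed under homomorphisms, inverse homomorphisms,
and intersection with regular languages. -/
def IsCone (C : LangClass) : Prop :=
  ClosedUnderHom C ∧ ClosedUnderInvHom C ∧ ClosedUnderInterReg C

/-- A full semi-AFL: a cone closed under union. -/
def IsFullSemiAFL (C : LangClass) : Prop :=
  IsCone C ∧ ClosedUnderUnion C

/-- `G` is `C^∀`-flat as a group: for every finitely generated subgroup `H ≤ G`
(presented by a finite monoid generating map `ρ`), a subset of `H` is a `C^∀`-subset
of `G` iff it is a `C^∀`-subset of `H`; i.e. `C^∀(G | H) = C^∀(H)`. -/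
def GroupCForallFlat (C : LangClass) (G : Type) [Group G] : Prop :=
  ∀ (H : Subgroup G) (n k : ℕ) (π : List (Fin n) → G) (ρ : List (Fin k) → ↥H),
    FreeHomOnto G π → FreeHomOnto (↥H) ρ →
      ∀ X : Set G, X ⊆ (H : Set G) →
        (CForall C π X ↔ CForall C ρ (Subtype.val ⁻¹' X))

/-- `G` is `C^∃`-flat as a group: for every finitely generated subgroup `H ≤ G`,
a subset of `H` is a `C^∃`-subset of `G` iff it is a `C^∃`-subset of `H`;
i.e. `C^∃(G | H) = C^∃(H)`. -/
def GroupCExistsFlat (C : LangClass) (G : Type) [Group G] : Prop :=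
  ∀ (H : Subgroup G) (n k : ℕ) (π : List (Fin n) → G) (ρ : List (Fin k) → ↥H),
    FreeHomOnto G π → FreeHomOnto (↥H) ρ →
      ∀ X : Set G, X ⊆ (H : Set G) →
        (CExists C π X ↔ CExists C ρ (Subtype.val ⁻¹' X))

/-- `M` is `C^∀`-flat as a monoid: for every finitely generated submonoid `N ≤ M`,
a subset of `N` is a `C^∀`-subset of `M` iff it is a `C^∀`-subset of `N`;
i.e. `C^∀(M | N) = C^∀(N)`. -/
def MonoidCForallFlat (C : LangClass) (M : Type) [Monoid M] : Prop :=
  ∀ (N : Submonoid M) (n k : ℕ) (π : List (Fin n) → M) (ρ : List (Fin k) → ↥N),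
    FreeHomOnto M π → FreeHomOnto (↥N) ρ →
      ∀ X : Set M, X ⊆ (N : Set M) →
        (CForall C π X ↔ CForall C ρ (Subtype.val ⁻¹' X))

/-- `M` is `C^∃`-flat as a monoid: for every finitely generated submonoid `N ≤ M`,
a subset of `N` is a `C^∃`-subset of `M` iff it is a `C^∃`-subset of `N`;
i.e. `C^∃(M | N) = C^∃(N)`. -/
def MonoidCExistsFlat (C : LangClass) (M : Type) [Monoid M] : Prop :=
  ∀ (N : Submonoid M) (n k : ℕ) (π : List (Fin n) → M) (ρ : List (Fin k) → ↥N),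
    FreeHomOnto M π → FreeHomOnto (↥N) ρ →
      ∀ X : Set M, X ⊆ (N : Set M) →
        (CExists C π X ↔ CExists C ρ (Subtype.val ⁻¹' X))
/-!
Write `X = ⋃ᵢ (X bᵢ⁻¹ ∩ H) bᵢ`. Both inclusions then follow from three closure properties of
`C^•`-subsets. Right translation by `g` amounts to appending a fixed word for `g`, which a cone
can do with an end marker cut out by a regular language. Restricting to, or including from, `H`
is an inverse homomorphism or a homomorphism sending the generators of `H` to words over those of
`G`. Finally, since `H` has finite index, a word over `G` lying in `H` is rewritten into a word
over `H` by a finite-state transducer following the right coset of each prefix; a cone simulates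
such a transducer by annotating each letter with the current state, which is a regular coding
undone by a homomorphism.
-/

open Function

theorem ClosedUnderUnion.iUnion_mem {C : LangClass} (hC : ClosedUnderUnion C) {ι : Type*}
    [Finite ι] [Nonempty ι] {n : ℕ} (L : ι → Set (List (Fin n))) (hL : ∀ i, L i ∈ C n) :
    ⋃ i, L i ∈ C n := by
  have hfin : ∀ s : Finset ι, s.Nonempty → ⋃ i ∈ s, L i ∈ C n := by
    intro s hs
    induction hs using Finset.Nonempty.cons_induction with
    | singleton i => simpa using hL i
    | cons i s _ _ ih => simpa using hC n _ (hL i) _ ih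
  have := Fintype.ofFinite ι
  simpa using hfin Finset.univ Finset.univ_nonempty

theorem isRegularLang_setOf_foldl {n : ℕ} {σ : Type} [Finite σ] (step : σ → Fin n → σ) (s : σ)
    (F : Set σ) : IsRegularLang {w : List (Fin n) | w.foldl step s ∈ F} :=
  ⟨σ, Fintype.ofFinite σ, ⟨step, s, F⟩, fun _ => Iff.rfl⟩

section Encoding

variable {C : LangClass} {n p m : ℕ} {enc : List (Fin n) → List (Fin p)}
  {W : Set (List (Fin n))}

theorem IsCone.setOf_flatMap_enc_mem (hC : IsCone C) (dec : Fin p → List (Fin n))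
    (hdec : ∀ w, (enc w).flatMap dec = w) (hW : IsRegularLang (enc '' W))
    (h : Fin p → List (Fin m)) {L : Set (List (Fin m))} (hL : L ∈ C m) :
    {w | w ∈ W ∧ (enc w).flatMap h ∈ L} ∈ C n := by
  have hinv : LeftInverse (fun v => v.flatMap dec) enc := hdec
  have key : (fun v => v.flatMap dec) '' ({v | v.flatMap h ∈ L} ∩ enc '' W) =
      {w | w ∈ W ∧ (enc w).flatMap h ∈ L} := by
    rw [Set.inter_comm, ← Set.image_inter_preimage, hinv.image_image]
    rfl
  exact key ▸ hC.1 _ _ dec _ (hC.2.2 _ _ (hC.2.1 _ _ h _ hL) _ hW)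

theorem IsCone.image_flatMap_enc_mem (hC : IsCone C) (dec : Fin p → List (Fin n))
    (hdec : ∀ w, (enc w).flatMap dec = w) (hW : IsRegularLang (enc '' W))
    (h : Fin p → List (Fin m)) {M : Set (List (Fin n))} (hM : M ∈ C n) :
    (fun w => (enc w).flatMap h) '' (M ∩ W) ∈ C m := by
  have key : (fun v => v.flatMap h) '' ({v | v.flatMap dec ∈ M} ∩ enc '' W) =
      (fun w => (enc w).flatMap h) '' (M ∩ W) := by
    rw [Set.inter_comm, ← Set.image_inter_preimage, Set.image_image, Set.inter_comm]
    simp only [Set.preimage_ofPred_eq, hdec, Set.ofPred_mem_eq]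
  exact key ▸ hC.1 _ _ h _ (hC.2.2 _ _ (hC.2.1 _ _ dec _ hM) _ hW)

end Encoding

section Suffix

def markEnd {m : ℕ} (u : List (Fin m)) : List (Fin (m + 1)) :=
  u.map Fin.castSucc ++ [Fin.last m]

def markEndStep {m : ℕ} : Option Bool → Fin (m + 1) → Option Bool
  | some false, x => if x = Fin.last m then some true else some false
  | _, _ => none

theorem foldl_markEndStep_of_ne {m : ℕ} (v : List (Fin (m + 1))) {s : Option Bool}
    (hs : s ≠ some false) : v.foldl markEndStep s = if v = [] then s else none := by
  induction v generalizing s with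
  | nil => rfl
  | cons x v ih =>
    have hnone : markEndStep s x = none := by
      rcases s with _ | _ | _ <;> first | rfl | exact absurd rfl hs
    simp [hnone, ih]

theorem foldl_markEndStep_eq_some_true {m : ℕ} (v : List (Fin (m + 1))) :
    v.foldl markEndStep (some false) = some true ↔ v ∈ Set.range markEnd := by
  induction v with
  | nil => simp [markEnd]
  | cons x v ih =>
    rcases Fin.eq_castSucc_or_eq_last x with ⟨c, rfl⟩ | rfl
    · simp only [List.foldl_cons, markEndStep, (Fin.castSucc_lt_last c).ne, if_false, ih]
      constructor
      · rintro ⟨u, rfl⟩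
        exact ⟨c :: u, rfl⟩
      · rintro ⟨_ | ⟨c', u⟩, hu⟩
        · simp [markEnd, (Fin.castSucc_lt_last c).ne'] at hu
        · simp only [markEnd, List.map_cons, List.cons_append, List.cons.injEq] at hu
          exact ⟨u, hu.2⟩
    · rw [List.foldl_cons, markEndStep, if_pos rfl, foldl_markEndStep_of_ne v (by simp)]
      constructor
      · intro h
        obtain rfl : v = [] := by by_contra hv; simp [hv] at h
        exact ⟨[], rfl⟩
      · rintro ⟨_ | ⟨c', u⟩, hu⟩
        · simp_all [markEnd]
        · simp [markEnd, (Fin.castSucc_lt_last c').ne] at hu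

theorem isRegularLang_range_markEnd (m : ℕ) : IsRegularLang (Set.range (markEnd (m := m))) := by
  have := isRegularLang_setOf_foldl (markEndStep (m := m)) (some false) {some true}
  simpa only [Set.mem_singleton_iff, foldl_markEndStep_eq_some_true, Set.ofPred_mem_eq] using this

theorem flatMap_markEnd {m n : ℕ} (u : List (Fin m)) (f : Fin m → List (Fin n))
    (s : List (Fin n)) : (markEnd u).flatMap (Fin.lastCases s f) = u.flatMap f ++ s := by
  simp [markEnd, List.flatMap_map]

theorem IsCone.setOf_append_mem {C : LangClass} (hC : IsCone C) {n : ℕ} (s : List (Fin n))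
    {L : Set (List (Fin n))} (hL : L ∈ C n) : {u | u ++ s ∈ L} ∈ C n := by
  have := hC.setOf_flatMap_enc_mem (enc := markEnd) (Fin.lastCases [] fun c => [c]) (W := Set.univ)
    (fun u => by simpa using flatMap_markEnd u (fun c => [c]) [])
    (by simpa using isRegularLang_range_markEnd n) (Fin.lastCases s fun c => [c]) hL
  simpa [flatMap_markEnd] using this

theorem IsCone.image_append_mem {C : LangClass} (hC : IsCone C) {n : ℕ} (s : List (Fin n))
    {L : Set (List (Fin n))} (hL : L ∈ C n) : (· ++ s) '' L ∈ C n := by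
  have := hC.image_flatMap_enc_mem (enc := markEnd) (Fin.lastCases [] fun c => [c]) (W := Set.univ)
    (fun u => by simpa using flatMap_markEnd u (fun c => [c]) [])
    (by simpa using isRegularLang_range_markEnd n) (Fin.lastCases s fun c => [c]) hL
  simpa [flatMap_markEnd] using this

end Suffix

section Transducer

variable {σ α β : Type}

def runAnnot (δ : σ → α → σ) : σ → List α → List (σ × α)
  | _, [] => []
  | s, a :: w => (s, a) :: runAnnot δ (δ s a) w

def transduce (δ : σ → α → σ) (out : σ → α → List β) (s : σ) (w : List α) : List β :=
  (runAnnot δ s w).flatMap (uncurry out)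

theorem transduce_nil (δ : σ → α → σ) (out : σ → α → List β) (s : σ) :
    transduce δ out s [] = [] := rfl

theorem transduce_cons (δ : σ → α → σ) (out : σ → α → List β) (s : σ) (a : α) (w : List α) :
    transduce δ out s (a :: w) = out s a ++ transduce δ out (δ s a) w := by
  simp [transduce, runAnnot]

theorem map_snd_runAnnot (δ : σ → α → σ) (s : σ) (w : List α) :
    (runAnnot δ s w).map Prod.snd = w := by
  induction w generalizing s with
  | nil => rfl
  | cons a w ih => simp [runAnnot, ih]

def runCheck [DecidableEq σ] (δ : σ → α → σ) : Option σ → σ × α → Option σ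
  | some s, (t, a) => if t = s then some (δ s a) else none
  | none, _ => none

theorem foldl_runCheck_none [DecidableEq σ] (δ : σ → α → σ) (v : List (σ × α)) :
    v.foldl (runCheck δ) none = none := by
  induction v with
  | nil => rfl
  | cons x v ih => exact ih

theorem foldl_runCheck_eq_some [DecidableEq σ] (δ : σ → α → σ) (v : List (σ × α)) (s t : σ) :
    v.foldl (runCheck δ) (some s) = some t ↔ ∃ w, runAnnot δ s w = v ∧ w.foldl δ s = t := by
  induction v generalizing s with
  | nil =>
    constructor
    · rintro ⟨⟩
      exact ⟨[], rfl, rfl⟩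
    · rintro ⟨_ | ⟨a, w⟩, hw, rfl⟩
      · rfl
      · simp [runAnnot] at hw
  | cons x v ih =>
    obtain ⟨s', a⟩ := x
    by_cases hs : s' = s
    · subst hs
      simp only [List.foldl_cons, runCheck, if_true, ih]
      constructor
      · rintro ⟨w, rfl, rfl⟩
        exact ⟨a :: w, rfl, rfl⟩
      · rintro ⟨_ | ⟨a', w⟩, hw, rfl⟩
        · simp [runAnnot] at hw
        · simp only [runAnnot, List.cons.injEq, Prod.mk.injEq, true_and] at hw
          obtain ⟨rfl, hw⟩ := hw
          exact ⟨w, hw, rfl⟩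
    · simp only [List.foldl_cons, runCheck, if_neg hs, foldl_runCheck_none, reduceCtorEq,
        false_iff, not_exists, not_and]
      rintro (_ | ⟨a', w⟩) hw
      · simp [runAnnot] at hw
      · simp [runAnnot, Ne.symm hs] at hw

theorem exists_enc_transduce {n m : ℕ} [Finite σ] (δ : σ → Fin n → σ)
    (out : σ → Fin n → List (Fin m)) (s t : σ) :
    ∃ (p : ℕ) (enc : List (Fin n) → List (Fin p)) (dec : Fin p → List (Fin n))
      (h : Fin p → List (Fin m)), (∀ w, (enc w).flatMap dec = w) ∧
      (∀ w, (enc w).flatMap h = transduce δ out s w) ∧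
      IsRegularLang (enc '' {w | w.foldl δ s = t}) := by
  classical
  let e := Finite.equivFin (σ × Fin n)
  refine ⟨_, fun w => (runAnnot δ s w).map e, fun x => [(e.symm x).2],
    fun x => uncurry out (e.symm x), fun w => ?_, fun w => ?_, ?_⟩
  · simpa [List.flatMap_map, ← List.map_eq_flatMap] using map_snd_runAnnot δ s w
  · simp [List.flatMap_map, transduce]
  · have := isRegularLang_setOf_foldl (fun o x => runCheck δ o (e.symm x)) (some s) {some t}
    convert this using 1
    ext v
    simp only [Set.mem_image, Set.mem_ofPred_eq, Set.mem_singleton_iff, ← List.foldl_map,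
      foldl_runCheck_eq_some]
    constructor
    · rintro ⟨w, hw, rfl⟩
      exact ⟨w, by simp, hw⟩
    · rintro ⟨w, hw, rfl⟩
      exact ⟨w, rfl, by simp [hw]⟩

theorem IsCone.setOf_transduce_mem {C : LangClass} (hC : IsCone C) {n m : ℕ} [Finite σ]
    (δ : σ → Fin n → σ) (out : σ → Fin n → List (Fin m)) (s t : σ) {L : Set (List (Fin m))}
    (hL : L ∈ C m) : {w | w.foldl δ s = t ∧ transduce δ out s w ∈ L} ∈ C n := by
  obtain ⟨p, enc, dec, h, hdec, henc, hreg⟩ := exists_enc_transduce δ out s t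
  simpa only [henc, Set.mem_ofPred_eq] using hC.setOf_flatMap_enc_mem dec hdec hreg h hL

theorem IsCone.image_transduce_mem {C : LangClass} (hC : IsCone C) {n m : ℕ} [Finite σ]
    (δ : σ → Fin n → σ) (out : σ → Fin n → List (Fin m)) (s t : σ) {M : Set (List (Fin n))}
    (hM : M ∈ C n) : transduce δ out s '' (M ∩ {w | w.foldl δ s = t}) ∈ C m := by
  obtain ⟨p, enc, dec, h, hdec, henc, hreg⟩ := exists_enc_transduce δ out s t
  simpa only [henc] using hC.image_flatMap_enc_mem dec hdec hreg h hM

end Transducer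

section Presentation

variable {C : LangClass} {M M' : Type} [Monoid M] [Monoid M'] {n k : ℕ}
  {π : List (Fin n) → M} {ρ : List (Fin k) → M'}

theorem FreeHomOnto.map_cons (hπ : FreeHomOnto M π) (a : Fin n) (w : List (Fin n)) :
    π (a :: w) = π [a] * π w :=
  hπ.map_append [a] w

theorem FreeHomOnto.map_flatMap (hπ : FreeHomOnto M π) (hρ : FreeHomOnto M' ρ) (φ : M' →* M)
    {f : Fin k → List (Fin n)} (hf : ∀ c, π (f c) = φ (ρ [c])) (u : List (Fin k)) :
    π (u.flatMap f) = φ (ρ u) := by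
  induction u with
  | nil => simp [hπ.map_nil, hρ.map_nil]
  | cons c u ih => rw [List.flatMap_cons, hπ.map_append, hf, ih, ← map_mul, ← hρ.map_cons]

theorem CForall.preimage_mul_right (hC : IsCone C) (hπ : FreeHomOnto M π) {X : Set M}
    (hX : CForall C π X) (g : M) : CForall C π {x | x * g ∈ X} := by
  obtain ⟨v, rfl⟩ := hπ.surjective g
  simpa only [CForall, Set.mem_ofPred_eq, hπ.map_append] using hC.setOf_append_mem v hX

theorem CExists.image_mul_right (hC : IsCone C) (hπ : FreeHomOnto M π) {X : Set M}
    (hX : CExists C π X) (g : M) : CExists C π ((· * g) '' X) := by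
  obtain ⟨L, hL, rfl⟩ := hX
  obtain ⟨v, rfl⟩ := hπ.surjective g
  refine ⟨(· ++ v) '' L, hC.image_append_mem v hL, ?_⟩
  simp only [Set.image_image, hπ.map_append]

theorem CForall.preimage_monoidHom (hC : ClosedUnderInvHom C) (hπ : FreeHomOnto M π)
    (hρ : FreeHomOnto M' ρ) (φ : M' →* M) {X : Set M} (hX : CForall C π X) :
    CForall C ρ (φ ⁻¹' X) := by
  choose f hf using fun c => hπ.surjective (φ (ρ [c]))
  simpa only [CForall, Set.mem_ofPred_eq, Set.mem_preimage, hπ.map_flatMap hρ φ hf] using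
    hC _ _ f _ hX

theorem CExists.image_monoidHom (hC : ClosedUnderHom C) (hπ : FreeHomOnto M π)
    (hρ : FreeHomOnto M' ρ) (φ : M' →* M) {Y : Set M'} (hY : CExists C ρ Y) :
    CExists C π (φ '' Y) := by
  obtain ⟨L, hL, rfl⟩ := hY
  choose f hf using fun c => hπ.surjective (φ (ρ [c]))
  refine ⟨_, hC _ _ f L hL, ?_⟩
  simp only [Set.image_image, hπ.map_flatMap hρ φ hf]

theorem CForall.iUnion (hC : ClosedUnderUnion C) {ι : Type*} [Finite ι] [Nonempty ι]
    {X : ι → Set M} (hX : ∀ i, CForall C π (X i)) : CForall C π (⋃ i, X i) := by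
  simpa only [CForall, Set.mem_iUnion, Set.ofPred_exists] using hC.iUnion_mem _ hX

theorem CExists.iUnion (hC : ClosedUnderUnion C) {ι : Type*} [Finite ι] [Nonempty ι]
    {X : ι → Set M} (hX : ∀ i, CExists C π (X i)) : CExists C π (⋃ i, X i) := by
  choose L hL hLX using hX
  exact ⟨⋃ i, L i, hC.iUnion_mem L hL, by simp only [Set.image_iUnion, hLX]⟩

end Presentation

section FiniteIndex

variable {C : LangClass} {G : Type} [Group G] {H : Subgroup G} {n k : ℕ}
  {π : List (Fin n) → G} {ρ : List (Fin k) → H}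

/-- Reidemeister–Schreier rewriting, driven by the automaton of right cosets of `H`. -/
theorem exists_transduce_of_finiteIndex [H.FiniteIndex] (hπ : FreeHomOnto G π)
    (hρ : FreeHomOnto H ρ) :
    ∃ (σ : Type) (_ : Finite σ) (δ : σ → Fin n → σ) (out : σ → Fin n → List (Fin k)) (s : σ),
      ∀ w, (w.foldl δ s = s ↔ π w ∈ H) ∧
        ∀ hw : π w ∈ H, ρ (transduce δ out s w) = ⟨π w, hw⟩ := by
  classical
  let Q := Quotient (QuotientGroup.rightRel H)
  have : Finite Q := .of_equiv _ (QuotientGroup.quotientRightRelEquivQuotientLeftRel H).symm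
  let mk : G → Q := Quotient.mk _
  have mk_eq_iff (x y : G) : mk x = mk y ↔ y * x⁻¹ ∈ H :=
    Quotient.eq.trans QuotientGroup.rightRel_apply
  let δ (q : Q) (a : Fin n) : Q := Quotient.map (· * π [a]) (fun x y hxy => by
    simpa [QuotientGroup.rightRel_apply, mul_assoc] using hxy) q
  have δ_mk (g : G) (a : Fin n) : δ (mk g) a = mk (g * π [a]) := rfl
  have foldl_δ (w : List (Fin n)) (g : G) : w.foldl δ (mk g) = mk (g * π w) := by
    induction w generalizing g with
    | nil => simp [hπ.map_nil]
    | cons a w ih => rw [List.foldl_cons, δ_mk, ih, hπ.map_cons a w, mul_assoc]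
  -- `H` itself is represented by `1`, so a run returning to `mk 1` outputs a word for `π w`
  let rep (q : Q) : G := if q = mk 1 then 1 else q.out
  have mk_rep (q : Q) : mk (rep q) = q := by
    by_cases hq : q = mk 1
    · simp [rep, hq]
    · simp only [rep, hq, if_false]; exact q.out_eq
  have rep_mem (q : Q) (a : Fin n) : rep q * π [a] * (rep (δ q a))⁻¹ ∈ H := by
    rw [← mk_eq_iff, mk_rep, ← δ_mk, mk_rep]
  choose out hout using fun q a => hρ.surjective ⟨_, rep_mem q a⟩
  have transduce_run (w : List (Fin n)) (q : Q) :
      (ρ (transduce δ out q w) : G) = rep q * π w * (rep (w.foldl δ q))⁻¹ := by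
    induction w generalizing q with
    | nil => simp [transduce_nil, hρ.map_nil, hπ.map_nil]
    | cons a w ih =>
      simp only [transduce_cons, hρ.map_append, Subgroup.coe_mul, hout, ih, hπ.map_cons a w,
        List.foldl_cons]
      group
  have foldl_mk_one (w : List (Fin n)) : w.foldl δ (mk 1) = mk 1 ↔ π w ∈ H := by
    rw [foldl_δ, one_mul, mk_eq_iff, one_mul, inv_mem_iff]
  refine ⟨Q, this, δ, out, mk 1, fun w => ⟨foldl_mk_one w, fun hw => Subtype.ext ?_⟩⟩
  rw [transduce_run, (foldl_mk_one w).2 hw]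
  simp [rep]

theorem CForall.image_subtype_of_finiteIndex [H.FiniteIndex] (hC : IsCone C)
    (hπ : FreeHomOnto G π) (hρ : FreeHomOnto H ρ) {Y : Set H} (hY : CForall C ρ Y) :
    CForall C π (Subtype.val '' Y) := by
  obtain ⟨σ, _, δ, out, s, hrun⟩ := exists_transduce_of_finiteIndex hπ hρ
  have key : {w | π w ∈ Subtype.val '' Y} =
      {w | w.foldl δ s = s ∧ transduce δ out s w ∈ {u | ρ u ∈ Y}} := by
    ext w
    simp only [Set.mem_ofPred_eq, (hrun w).1]
    constructor
    · rintro ⟨y, hy, hyw⟩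
      have hw : π w ∈ H := hyw ▸ y.2
      refine ⟨hw, ?_⟩
      rwa [(hrun w).2 hw, show (⟨π w, hw⟩ : H) = y from Subtype.ext hyw.symm]
    · rintro ⟨hw, hY⟩
      exact ⟨_, hY, by rw [(hrun w).2 hw]⟩
  rw [CForall, key]
  exact hC.setOf_transduce_mem δ out s s hY

theorem CExists.preimage_subtype_of_finiteIndex [H.FiniteIndex] (hC : IsCone C)
    (hπ : FreeHomOnto G π) (hρ : FreeHomOnto H ρ) {X : Set G} (hX : CExists C π X) :
    CExists C ρ (Subtype.val ⁻¹' X) := by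
  obtain ⟨L, hL, rfl⟩ := hX
  obtain ⟨σ, _, δ, out, s, hrun⟩ := exists_transduce_of_finiteIndex hπ hρ
  refine ⟨_, hC.image_transduce_mem δ out s s hL, ?_⟩
  ext y
  simp only [Set.image_image, Set.mem_image, Set.mem_inter_iff, Set.mem_ofPred_eq,
    Set.mem_preimage]
  constructor
  · rintro ⟨w, ⟨hwL, hws⟩, rfl⟩
    exact ⟨w, hwL, by rw [(hrun w).2 ((hrun w).1.1 hws)]⟩
  · rintro ⟨w, hwL, hwy⟩
    have hw : π w ∈ H := hwy ▸ y.2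
    exact ⟨w, ⟨hwL, (hrun w).1.2 hw⟩, by rw [(hrun w).2 hw]; exact Subtype.ext hwy⟩

end FiniteIndex

section Transversal

variable {G : Type} [Group G] {ι : Type*}

theorem Subgroup.finiteIndex_of_forall_exists_mul_inv_mem (H : Subgroup G) [Finite ι]
    (b : ι → G) (hb : ∀ g, ∃ i, g * (b i)⁻¹ ∈ H) : H.FiniteIndex := by
  have : Finite (G ⧸ H) := by
    refine Finite.of_surjective (fun i => (((b i)⁻¹ : G) : G ⧸ H)) fun q => ?_
    induction q using QuotientGroup.induction_on with
    | H g =>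
      obtain ⟨i, hi⟩ := hb g⁻¹
      exact ⟨i, QuotientGroup.eq.2 (by simpa using H.inv_mem hi)⟩
  exact H.finiteIndex_of_finite_quotient

theorem Subgroup.iUnion_image_mul_setOf_mul_mem (H : Subgroup G) (b : ι → G)
    (hb : ∀ g, ∃ i, g * (b i)⁻¹ ∈ H) (X : Set G) :
    ⋃ i, (fun y : H => (y : G) * b i) '' {y : H | (y : G) * b i ∈ X} = X := by
  ext g
  simp only [Set.mem_iUnion, Set.mem_image, Set.mem_ofPred_eq]
  constructor
  · rintro ⟨i, y, hy, rfl⟩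
    exact hy
  · intro hg
    obtain ⟨i, hi⟩ := hb g
    exact ⟨i, ⟨_, hi⟩, by simpa using hg, by simp⟩

end Transversal

/-- Let `C` be a full semi-AFL, `G` a finitely generated group,
`H ≤ G` a finite index subgroup and `b 0, …, b (N-1)` a right transversal for `H`
in `G` (every `g ∈ G` lies in exactly one coset `H * b i`).  Then, both for `• = ∀`
and `• = ∃`, the `C^•`-subsets of `G` are exactly the sets `⋃ i, (L i) * b i` with
each `L i` a `C^•`-subset of `H`. -/
theorem stmt8 (C : LangClass) (hC : IsFullSemiAFL C)
    {G : Type} [Group G] (H : Subgroup G)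
    {N : ℕ} (b : Fin N → G)
    (htrans : ∀ g : G, ∃! i : Fin N, g * (b i)⁻¹ ∈ H)
    {n k : ℕ} (π : List (Fin n) → G) (hπ : FreeHomOnto G π)
    (ρ : List (Fin k) → ↥H) (hρ : FreeHomOnto (↥H) ρ) :
    (∀ X : Set G,
      CForall C π X ↔ ∃ L : Fin N → Set ↥H, (∀ i, CForall C ρ (L i)) ∧
        X = ⋃ i, (fun y : ↥H => (y : G) * b i) '' L i) ∧
    (∀ X : Set G,
      CExists C π X ↔ ∃ L : Fin N → Set ↥H, (∀ i, CExists C ρ (L i)) ∧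
        X = ⋃ i, (fun y : ↥H => (y : G) * b i) '' L i) := by
  obtain ⟨hCone, hUnion⟩ := hC
  have hcover (g : G) : ∃ i, g * (b i)⁻¹ ∈ H := (htrans g).exists
  have : Nonempty (Fin N) := ⟨(hcover 1).choose⟩
  have : H.FiniteIndex := H.finiteIndex_of_forall_exists_mul_inv_mem b hcover
  have image_eq (i : Fin N) (L : Set H) :
      (fun y : H => (y : G) * b i) '' L = (· * b i) '' (Subtype.val '' L) :=
    (Set.image_image (· * b i) Subtype.val L).symm
  refine ⟨fun X => ⟨fun hX => ?_, ?_⟩, fun X => ⟨fun hX => ?_, ?_⟩⟩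
  · refine ⟨_, fun i => ?_, (H.iUnion_image_mul_setOf_mul_mem b hcover X).symm⟩
    exact (hX.preimage_mul_right hCone hπ (b i)).preimage_monoidHom hCone.2.1 hπ hρ H.subtype
  · rintro ⟨L, hL, rfl⟩
    refine CForall.iUnion hUnion fun i => ?_
    rw [image_eq, Set.image_mul_right]
    exact (CForall.image_subtype_of_finiteIndex hCone hπ hρ (hL i)).preimage_mul_right hCone hπ _
  · refine ⟨_, fun i => ?_, (H.iUnion_image_mul_setOf_mul_mem b hcover X).symm⟩
    have := (hX.image_mul_right hCone hπ (b i)⁻¹).preimage_subtype_of_finiteIndex hCone hπ hρ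
    rwa [Set.image_mul_right'] at this
  · rintro ⟨L, hL, rfl⟩
    refine CExists.iUnion hUnion fun i => ?_
    rw [image_eq]
    exact ((hL i).image_monoidHom hCone.1 hπ hρ H.subtype).image_mul_right hCone hπ (b i)
end

section
/- Let 𝐂 be a full semi-AFL, G a finitely generated group, and H ≤ G a subgroup of finite index. Then, for each • ∈ {∀, ∃}: the family 𝐂^•(G) is closed under complement in G (i.e. X ∈ 𝐂^•(G) implies G \ X ∈ 𝐂^•(G)) if and only if the family 𝐂^•(H) is closed under complement in H (i.e. Y ∈ 𝐂^•(H) implies H \ Y ∈ 𝐂^•(H)). -/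
/-! Restriction to `H` and extension from `H` are realised by rational transductions, under which
every cone is closed: in one direction by a homomorphism lifting the inclusion `H → G` to the
free monoids, in the other by Reidemeister–Schreier rewriting, a finite transducer whose states
are the cosets of `H`. Prefixing a fixed word likewise shows that `C^•(G)` is closed under
translation. Closure under complement then passes from `G` to `H` by restriction, and from `H`
to `G` by glueing complements taken in `H` over the finitely many cosets. -/

open scoped Pointwise

def IsPath {E Q : Type*} (src tgt : E → Q) : Q → List E → Q → Prop
  | q, [], q' => q = q'
  | q, e :: w, q' => src e = q ∧ IsPath src tgt (tgt e) w q'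

section Paths

variable {E Q : Type*} (src tgt : E → Q)

@[simp] lemma isPath_nil {q q' : Q} : IsPath src tgt q [] q' ↔ q = q' := Iff.rfl

@[simp] lemma isPath_cons {q q' : Q} {e : E} {w : List E} :
    IsPath src tgt q (e :: w) q' ↔ src e = q ∧ IsPath src tgt (tgt e) w q' := Iff.rfl

def pathDFA [DecidableEq Q] (s f : Q) : DFA E (Option Q) where
  step o e := o.bind fun q => if src e = q then some (tgt e) else none
  start := some s
  accept := {some f}

variable [DecidableEq Q] (s f : Q)

lemma pathDFA_evalFrom_none (w : List E) : (pathDFA src tgt s f).evalFrom none w = none := by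
  induction w with
  | nil => rfl
  | cons e w ih => exact ih

lemma pathDFA_step_some (q : Q) (e : E) :
    (pathDFA src tgt s f).step (some q) e = if src e = q then some (tgt e) else none := rfl

lemma pathDFA_evalFrom_some (w : List E) (q q' : Q) :
    (pathDFA src tgt s f).evalFrom (some q) w = some q' ↔ IsPath src tgt q w q' := by
  induction w generalizing q with
  | nil => simp
  | cons e w ih =>
    rw [DFA.evalFrom_cons, pathDFA_step_some, isPath_cons]
    split_ifs with he
    · simp [he, ih]
    · simp [he, pathDFA_evalFrom_none]

lemma mem_pathDFA_accepts (w : List E) :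
    w ∈ (pathDFA src tgt s f).accepts ↔ IsPath src tgt s w f := by
  rw [DFA.mem_accepts, DFA.eval, ← pathDFA_evalFrom_some src tgt s f]
  rfl

end Paths

/-- Nivat's morphic representation of rational relations: `T` is the image of a regular
language under a pair of homomorphisms. -/
def IsRationalRel {m n : ℕ} (T : List (Fin m) → List (Fin n) → Prop) : Prop :=
  ∃ (N : ℕ) (p : Fin N → List (Fin m)) (q : Fin N → List (Fin n)) (R : Set (List (Fin N))),
    IsRegularLang R ∧ ∀ u v, T u v ↔ ∃ w ∈ R, w.flatMap p = u ∧ w.flatMap q = v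

lemma IsRationalRel.flip {m n : ℕ} {T : List (Fin m) → List (Fin n) → Prop}
    (hT : IsRationalRel T) : IsRationalRel (flip T) := by
  obtain ⟨N, p, q, R, hR, hTR⟩ := hT
  exact ⟨N, q, p, R, hR, fun v u => (hTR u v).trans <| by simp only [and_comm]⟩

lemma IsCone.setOf_rel_mem {C : LangClass} (hC : IsCone C) {m n : ℕ}
    {T : List (Fin m) → List (Fin n) → Prop} (hT : IsRationalRel T) {L : Set (List (Fin m))}
    (hL : L ∈ C m) : {v | ∃ u ∈ L, T u v} ∈ C n := by
  obtain ⟨hHom, hInv, hReg⟩ := hC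
  obtain ⟨N, p, q, R, hR, hTR⟩ := hT
  convert hHom N n q _ (hReg N _ (hInv N m p L hL) R hR) using 1
  ext v
  simp only [hTR, Set.mem_ofPred_eq, Set.mem_image, Set.mem_inter_iff]
  constructor
  · rintro ⟨_, hu, w, hw, rfl, rfl⟩
    exact ⟨w, ⟨hu, hw⟩, rfl⟩
  · rintro ⟨w, ⟨hu, hw⟩, rfl⟩
    exact ⟨_, hu, w, hw, rfl, rfl⟩

/-- The input/output relation of a finite transducer with edge set `E`, states `Q`,
initial state `s` and final state `f`. -/
lemma isRationalRel_of_isPath {m n : ℕ} {E Q : Type} [Fintype E] [Finite Q]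
    (src tgt : E → Q) (p : E → List (Fin m)) (q : E → List (Fin n)) (s f : Q) :
    IsRationalRel fun u v => ∃ w, IsPath src tgt s w f ∧ w.flatMap p = u ∧ w.flatMap q = v := by
  classical
  have := Fintype.ofFinite Q
  set e := Fintype.equivFin E
  refine ⟨Fintype.card E, p ∘ e.symm, q ∘ e.symm, {w | IsPath src tgt s (w.map e.symm) f},
    ⟨Option Q, inferInstance, (pathDFA src tgt s f).comap e.symm, fun w => ?_⟩, fun u v => ?_⟩
  · rw [DFA.accepts_comap]
    exact mem_pathDFA_accepts src tgt s f _
  · constructor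
    · rintro ⟨w, hw, rfl, rfl⟩
      exact ⟨w.map e, by simpa using hw, by simp [List.flatMap_map], by simp [List.flatMap_map]⟩
    · rintro ⟨w, hw, rfl, rfl⟩
      exact ⟨w.map e.symm, hw, List.flatMap_map .., List.flatMap_map ..⟩

lemma isPath_isSome_iff {α : Type*} (w : List (Option α)) (b : Bool) :
    IsPath Option.isSome (fun _ => true) true w b ↔ ∃ v : List α, w = v.map some ∧ b = true := by
  induction w with
  | nil => exact ⟨fun h => ⟨[], rfl, h.symm⟩, fun ⟨_, _, hb⟩ => hb.symm⟩
  | cons e w ih =>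
    cases e with
    | none =>
      refine ⟨fun h => absurd h.1 (by simp), ?_⟩
      rintro ⟨_ | _, h, -⟩ <;> simp at h
    | some a =>
      rw [isPath_cons, ih]
      constructor
      · rintro ⟨-, v, rfl, rfl⟩
        exact ⟨a :: v, rfl, rfl⟩
      · rintro ⟨_ | ⟨a', v⟩, h, rfl⟩
        · simp at h
        · simp only [List.map_cons, List.cons.injEq, Option.some.injEq] at h
          exact ⟨rfl, v, h.2, rfl⟩

/-- A transducer with states `Bool`: an edge `none` from `false` to `true` reads `u₀`, and
loops `some a` at `true` copy the letter `a`. -/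
lemma isRationalRel_append_left {n : ℕ} (u₀ : List (Fin n)) :
    IsRationalRel fun u v : List (Fin n) => u = u₀ ++ v := by
  convert isRationalRel_of_isPath Option.isSome (fun _ => true) (fun e => e.elim u₀ ([·]))
    (fun e => e.elim [] ([·])) false true using 3 with u v
  constructor
  · rintro rfl
    exact ⟨none :: v.map some, ⟨rfl, (isPath_isSome_iff _ true).2 ⟨v, rfl, rfl⟩⟩,
      by simp [List.flatMap_map], by simp [List.flatMap_map]⟩
  · rintro ⟨_ | ⟨_ | a, w⟩, hw, rfl, rfl⟩
    · simp at hw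
    · obtain ⟨v, rfl, -⟩ := (isPath_isSome_iff w true).1 hw.2
      simp [List.flatMap_map]
    · simp at hw

namespace FreeHomOnto

variable {M N : Type} [Monoid M] [Monoid N] {n k : ℕ} {π : List (Fin n) → M}
  {ρ : List (Fin k) → N}

lemma map_cons_s10 (hπ : FreeHomOnto M π) (a : Fin n) (w : List (Fin n)) :
    π (a :: w) = π [a] * π w :=
  hπ.map_append [a] w

lemma exists_map_flatMap (hπ : FreeHomOnto M π) (hρ : FreeHomOnto N ρ) (φ : N →* M) :
    ∃ f : Fin k → List (Fin n), ∀ v, π (v.flatMap f) = φ (ρ v) := by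
  choose f hf using fun i => hπ.surjective (φ (ρ [i]))
  refine ⟨f, fun v => ?_⟩
  induction v with
  | nil => simp [hπ.map_nil, hρ.map_nil]
  | cons a v ih => rw [List.flatMap_cons, hπ.map_append, hf, ih, hρ.map_cons_s10 a v, map_mul]

end FreeHomOnto

section Transfer

variable {C : LangClass} {M N : Type} [Monoid M] [Monoid N] {n k : ℕ} {π : List (Fin n) → M}
  {ρ : List (Fin k) → N}

lemma CForall.union (hC : ClosedUnderUnion C) {X Y : Set M} (hX : CForall C π X)
    (hY : CForall C π Y) : CForall C π (X ∪ Y) :=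
  hC n _ hX _ hY

lemma CExists.union (hC : ClosedUnderUnion C) {X Y : Set M} (hX : CExists C π X)
    (hY : CExists C π Y) : CExists C π (X ∪ Y) := by
  obtain ⟨L₁, hL₁, rfl⟩ := hX
  obtain ⟨L₂, hL₂, rfl⟩ := hY
  exact ⟨L₁ ∪ L₂, hC n _ hL₁ _ hL₂, Set.image_union π L₁ L₂⟩

lemma CForall.comap (hC : ClosedUnderInvHom C) (hπ : FreeHomOnto M π) (hρ : FreeHomOnto N ρ)
    (φ : N →* M) {X : Set M} (hX : CForall C π X) : CForall C ρ (φ ⁻¹' X) := by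
  obtain ⟨f, hf⟩ := hπ.exists_map_flatMap hρ φ
  simpa [CForall, hf] using hC k n f _ hX

lemma CExists.map (hC : ClosedUnderHom C) (hπ : FreeHomOnto M π) (hρ : FreeHomOnto N ρ)
    (φ : N →* M) {Y : Set N} (hY : CExists C ρ Y) : CExists C π (φ '' Y) := by
  obtain ⟨f, hf⟩ := hπ.exists_map_flatMap hρ φ
  obtain ⟨L, hL, rfl⟩ := hY
  refine ⟨_, hC k n f L hL, ?_⟩
  rw [Set.image_image, Set.image_image]
  exact Set.image_congr fun v _ => hf v

lemma CForall.preimage_mul_left (hC : IsCone C) (hπ : FreeHomOnto M π) (g : M) {X : Set M}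
    (hX : CForall C π X) : CForall C π ((g * ·) ⁻¹' X) := by
  obtain ⟨u₀, rfl⟩ := hπ.surjective g
  unfold CForall at hX ⊢
  convert hC.setOf_rel_mem (isRationalRel_append_left u₀) hX using 1
  ext v
  simp [hπ.map_append]

lemma CExists.image_mul_left (hC : IsCone C) (hπ : FreeHomOnto M π) (g : M) {X : Set M}
    (hX : CExists C π X) : CExists C π ((g * ·) '' X) := by
  obtain ⟨u₀, rfl⟩ := hπ.surjective g
  obtain ⟨L, hL, rfl⟩ := hX
  refine ⟨_, hC.setOf_rel_mem (isRationalRel_append_left u₀).flip hL, ?_⟩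
  ext x
  simp [flip, hπ.map_append]

end Transfer

section Schreier

variable {G : Type} [Group G] (H : Subgroup G)

open Classical in
/-- Representing the coset `H` by `1` makes Schreier rewriting along loops at `H` exact. -/
noncomputable def cosetRep (c : G ⧸ H) : G :=
  if c = ((1 : G) : G ⧸ H) then 1 else c.out

lemma mk_cosetRep (c : G ⧸ H) : ((cosetRep H c : G) : G ⧸ H) = c := by
  unfold cosetRep
  split_ifs with h
  · exact h.symm
  · exact QuotientGroup.out_eq' c

lemma cosetRep_mk_one : cosetRep H ((1 : G) : G ⧸ H) = 1 := if_pos rfl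

lemma cosetRep_inv_mul_mul_cosetRep_mem (g : G) (c : G ⧸ H) :
    (cosetRep H c)⁻¹ * g * cosetRep H (g⁻¹ • c) ∈ H := by
  have h : ((g⁻¹ * cosetRep H c : G) : G ⧸ H) = (cosetRep H (g⁻¹ • c) : G) := by
    rw [mk_cosetRep, ← smul_eq_mul, ← MulAction.Quotient.smul_mk, mk_cosetRep]
  simpa [mul_assoc] using QuotientGroup.eq.1 h

variable {n k : ℕ} {π : List (Fin n) → G} {ρ : List (Fin k) → H}

/-- Reidemeister–Schreier rewriting as a transducer: its states are the left cosets of `H`,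
and reading the letter `a` in state `c` moves to `(π [a])⁻¹ • c` and writes a word for the
Schreier generator `(cosetRep c)⁻¹ * π [a] * cosetRep ((π [a])⁻¹ • c)`. -/
lemma exists_isRationalRel_schreier [H.FiniteIndex] (hπ : FreeHomOnto G π)
    (hρ : FreeHomOnto H ρ) :
    ∃ T : List (Fin k) → List (Fin n) → Prop, IsRationalRel T ∧
      (∀ v u, T v u → (ρ v : G) = π u) ∧ ∀ u, π u ∈ H → ∃ v, T v u := by
  have := Fintype.ofFinite (G ⧸ H)
  set t := cosetRep H
  let src : (G ⧸ H) × Fin n → G ⧸ H := Prod.fst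
  let tgt : (G ⧸ H) × Fin n → G ⧸ H := fun e => (π [e.2])⁻¹ • e.1
  let input : (G ⧸ H) × Fin n → List (Fin n) := fun e => [e.2]
  choose output houtput using fun e : (G ⧸ H) × Fin n =>
    hρ.surjective ⟨_, cosetRep_inv_mul_mul_cosetRep_mem H (π [e.2]) e.1⟩
  have sound : ∀ w c d, IsPath src tgt c w d →
      (ρ (w.flatMap output) : G) = (t c)⁻¹ * π (w.flatMap input) * t d := by
    intro w
    induction w with
    | nil =>
      rintro c d rfl
      simp [hρ.map_nil, hπ.map_nil]
    | cons e w ih =>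
      rintro c d ⟨rfl, hw⟩
      rw [List.flatMap_cons, hρ.map_append, Subgroup.coe_mul, houtput, ih _ _ hw,
        List.flatMap_cons, hπ.map_append]
      simp only [t, src, tgt, input]
      group
  have complete : ∀ u c, ∃ w, IsPath src tgt c w ((π u)⁻¹ • c) ∧ w.flatMap input = u := by
    intro u
    induction u with
    | nil => exact fun c => ⟨[], by simp [hπ.map_nil], rfl⟩
    | cons a u ih =>
      intro c
      obtain ⟨w, hw, hwu⟩ := ih ((π [a])⁻¹ • c)
      refine ⟨(c, a) :: w, ⟨rfl, ?_⟩, by simp [input, hwu]⟩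
      rwa [hπ.map_cons_s10, mul_inv_rev, mul_smul]
  refine ⟨fun v u => ∃ w, IsPath src tgt (1 : G) w (1 : G) ∧ w.flatMap output = v ∧
    w.flatMap input = u, isRationalRel_of_isPath src tgt output input _ _, ?_, fun u hu => ?_⟩
  · rintro _ _ ⟨w, hw, rfl, rfl⟩
    simpa [t, cosetRep_mk_one] using sound w _ _ hw
  · obtain ⟨w, hw, rfl⟩ := complete u (1 : G)
    have : (π (w.flatMap input))⁻¹ • ((1 : G) : G ⧸ H) = (1 : G) := by
      rw [MulAction.Quotient.smul_mk, smul_eq_mul, mul_one, QuotientGroup.eq]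
      simpa using hu
    rw [this] at hw
    exact ⟨_, w, hw, rfl, rfl⟩

end Schreier

section FiniteIndex

variable {C : LangClass} {G : Type} [Group G] {H : Subgroup G} [H.FiniteIndex] {n k : ℕ}
  {π : List (Fin n) → G} {ρ : List (Fin k) → H}

lemma CForall.image_val (hC : IsCone C) (hπ : FreeHomOnto G π) (hρ : FreeHomOnto H ρ)
    {Y : Set H} (hY : CForall C ρ Y) : CForall C π (Subtype.val '' Y) := by
  obtain ⟨T, hT, hsound, hcomplete⟩ := exists_isRationalRel_schreier H hπ hρ
  unfold CForall at hY ⊢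
  convert hC.setOf_rel_mem hT hY using 1
  ext u
  constructor
  · rintro ⟨y, hy, hyu⟩
    obtain ⟨v, hv⟩ := hcomplete u (hyu ▸ y.2)
    have hvy : ρ v = y := Subtype.ext ((hsound v u hv).trans hyu.symm)
    exact ⟨v, show ρ v ∈ Y from hvy ▸ hy, hv⟩
  · rintro ⟨v, hv, hvu⟩
    exact ⟨ρ v, hv, hsound v u hvu⟩

lemma CExists.preimage_val (hC : IsCone C) (hπ : FreeHomOnto G π) (hρ : FreeHomOnto H ρ)
    {X : Set G} (hX : CExists C π X) : CExists C ρ (Subtype.val ⁻¹' X) := by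
  obtain ⟨T, hT, hsound, hcomplete⟩ := exists_isRationalRel_schreier H hπ hρ
  obtain ⟨L, hL, rfl⟩ := hX
  refine ⟨_, hC.setOf_rel_mem hT.flip hL, ?_⟩
  ext y
  constructor
  · rintro ⟨v, ⟨u, hu, hvu⟩, rfl⟩
    exact ⟨u, hu, (hsound v u hvu).symm⟩
  · rintro ⟨u, hu, hy⟩
    obtain ⟨v, hv⟩ := hcomplete u (hy ▸ y.2)
    exact ⟨v, ⟨u, hu, hv⟩, Subtype.ext ((hsound v u hv).trans hy)⟩

end FiniteIndex

/-- Glueing over the finitely many cosets: `Xᶜ` is the union of the pieces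
`g • (H \ g⁻¹ • X)`, `g` running over coset representatives. -/
lemma Subgroup.forall_compl_mem_iff_of_finiteIndex {G : Type*} [Group G] (H : Subgroup G)
    [H.FiniteIndex] {𝓕 : Set (Set G)} {𝓖 : Set (Set H)}
    (smul_mem : ∀ (g : G), ∀ X ∈ 𝓕, g • X ∈ 𝓕) (union_mem : ∀ X ∈ 𝓕, ∀ Y ∈ 𝓕, X ∪ Y ∈ 𝓕)
    (preimage_mem : ∀ X ∈ 𝓕, Subtype.val ⁻¹' X ∈ 𝓖)
    (image_mem : ∀ Y ∈ 𝓖, Subtype.val '' Y ∈ 𝓕) :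
    (∀ X ∈ 𝓕, Xᶜ ∈ 𝓕) ↔ ∀ Y ∈ 𝓖, Yᶜ ∈ 𝓖 := by
  refine ⟨fun h Y hY => ?_, fun h X hX => ?_⟩
  · have := preimage_mem _ (h _ (image_mem Y hY))
    rwa [Set.preimage_compl, Set.preimage_image_eq _ Subtype.val_injective] at this
  · have := Fintype.ofFinite (G ⧸ H)
    let piece (c : G ⧸ H) : Set G := c.out • Subtype.val '' (Subtype.val ⁻¹' (c.out⁻¹ • X) : Set H)ᶜ
    have hpiece (c : G ⧸ H) : piece c ∈ 𝓕 :=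
      smul_mem _ _ (image_mem _ (h _ (preimage_mem _ (smul_mem _ _ hX))))
    have hcover : Xᶜ = Finset.univ.sup' Finset.univ_nonempty piece := by
      ext x
      simp only [Finset.sup'_eq_sup, Finset.sup_set_eq_biUnion, Finset.mem_univ,
        Set.iUnion_true, Set.mem_iUnion, piece, Set.mem_smul_set_iff_inv_smul_mem,
        Subtype.coe_image, Set.mem_compl_iff, Set.mem_preimage, inv_inv, Set.mem_ofPred_eq,
        exists_prop, smul_eq_mul, mul_inv_cancel_left]
      refine ⟨fun hx => ⟨x, QuotientGroup.eq.1 (QuotientGroup.out_eq' _), hx⟩, fun ⟨_, _, hx⟩ => hx⟩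
    rw [hcover]
    exact Finset.sup'_induction _ _ union_mem fun c _ => hpiece c

/-- Let `C` be a full semi-AFL, `G` a finitely generated group and
`H ≤ G` of finite index.  Then, for each `• ∈ {∀, ∃}`, the family `C^•(G)` is closed
under complement (in `G`) iff the family `C^•(H)` is closed under complement (in `H`). -/
theorem stmt10 (C : LangClass) (hC : IsFullSemiAFL C)
    {G : Type} [Group G] {n k : ℕ} (π : List (Fin n) → G) (hπ : FreeHomOnto G π)
    (H : Subgroup G) (hfi : H.FiniteIndex)
    (ρ : List (Fin k) → ↥H) (hρ : FreeHomOnto (↥H) ρ) :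
    ((∀ X : Set G, CForall C π X → CForall C π Xᶜ) ↔
      (∀ Y : Set ↥H, CForall C ρ Y → CForall C ρ Yᶜ)) ∧
    ((∀ X : Set G, CExists C π X → CExists C π Xᶜ) ↔
      (∀ Y : Set ↥H, CExists C ρ Y → CExists C ρ Yᶜ)) := by
  obtain ⟨hcone, hunion⟩ := hC
  constructor
  · refine H.forall_compl_mem_iff_of_finiteIndex (𝓕 := {X | CForall C π X})
      (𝓖 := {Y | CForall C ρ Y}) (fun g X hX => ?_) (fun X hX Y hY => hX.union hunion hY)
      (fun X hX => hX.comap hcone.2.1 hπ hρ H.subtype) (fun Y hY => hY.image_val hcone hπ hρ)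
    simpa [← smul_eq_mul, Set.preimage_smul] using hX.preimage_mul_left hcone hπ g⁻¹
  · refine H.forall_compl_mem_iff_of_finiteIndex (𝓕 := {X | CExists C π X})
      (𝓖 := {Y | CExists C ρ Y}) (fun g X hX => ?_) (fun X hX Y hY => hX.union hunion hY)
      (fun X hX => hX.preimage_val hcone hπ hρ) (fun Y hY => hY.map hcone.1 hπ hρ H.subtype)
    simpa [← smul_eq_mul, Set.image_smul] using hX.image_mul_left hcone hπ g
end
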